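/- Let L > 0, η > 0, ε_f > 0 and 0 ≤ Δ. If a ≥ 0 satisfies a ≤ ε_f (1 + η(1 − e^{−LΔ})), then a² · e^{−2LηΔ} ≤ ε_f². -/
import Mathlib

theorem stmt_1 (L η εf Δ a : ℝ) (hL : 0 < L) (hη : 0 < η) (hεf : 0 < εf) (hΔ : 0 ≤ Δ)
    (ha : 0 ≤ a) (hab : a ≤ εf * (1 + η * (1 - Real.exp (-L * Δ)))) :
    a ^ 2 * Real.exp (-2 * L * η * Δ) ≤ εf ^ 2 := by
  have e1 : 1 + (-(L*Δ)) ≤ Real.exp (-(L*Δ)) := by linarith [Real.add_one_le_exp (-(L*Δ)), Real.add_one_le_exp (η*(L*Δ))]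
  have key : a ≤ εf * Real.exp (η*(L*Δ)) := by
    have e2 : 1 + η*(L*Δ) ≤ Real.exp (η*(L*Δ)) := by linarith [Real.add_one_le_exp (-(L*Δ)), Real.add_one_le_exp (η*(L*Δ))]
    have h1 : 1 + η * (1 - Real.exp (-L * Δ)) ≤ Real.exp (η*(L*Δ)) := by
      have hre : Real.exp (-L*Δ) = Real.exp (-(L*Δ)) := by ring_nf
      rw [hre]
      nlinarith [hη.le, mul_nonneg hL.le hΔ]
    calc a ≤ εf * (1 + η * (1 - Real.exp (-L * Δ))) := hab
    _ ≤ εf * Real.exp (η*(L*Δ)) := by nlinarith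
  have epos : (0:ℝ) < Real.exp (η*(L*Δ)) := Real.exp_pos _
  have einvpos : (0:ℝ) < Real.exp (-(η*(L*Δ))) := Real.exp_pos _
  have hmul : Real.exp (η*(L*Δ)) * Real.exp (-(η*(L*Δ))) = 1 := by
    rw [← Real.exp_add]; simp
  have hsplit : Real.exp (-2 * L * η * Δ)
      = Real.exp (-(η*(L*Δ))) * Real.exp (-(η*(L*Δ))) := by
    rw [← Real.exp_add]; ring_nf
  have h2 : a * Real.exp (-(η*(L*Δ))) ≤ εf := by
    have := mul_le_mul_of_nonneg_right key einvpos.le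
    calc a * Real.exp (-(η*(L*Δ))) ≤ εf * Real.exp (η*(L*Δ)) * Real.exp (-(η*(L*Δ))) := this
    _ = εf := by rw [mul_assoc, hmul, mul_one]
  have h3 : (a * Real.exp (-(η*(L*Δ))))^2 ≤ εf^2 :=
    pow_le_pow_left₀ (by positivity) h2 2
  calc a ^ 2 * Real.exp (-2 * L * η * Δ) = (a * Real.exp (-(η*(L*Δ))))^2 := by
        rw [hsplit]; ring
  _ ≤ εf^2 := h3
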